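/- For every integer a ≥ 2, the genus of S(a) equals (a/5)·(l_a + l_{a−2}); equivalently, 5·g(S(a)) = a·(l_a + l_{a−2}). -/

import Mathlib

/-!
Write `m = l a`. The integer `defect a x = β (x % m) - x / m` is subadditive: adding remainders
costs at most `β r + β r'` summands, and when they carry past `m`, removing `m` from
`r + r' < 2 m` costs at most one more summand. It is `-1` at `m` and at most `1` at every Lucas
number, hence `≤ 0` on `S a`. Conversely a representation of `x % m` by `β (x % m) ≤ x / m`
modified Lucas numbers `l̃ i` writes `x` as a sum of generators `m + l̃ i` and copies of `m`.
So the gaps of `S a` are the `q m + r` with `r < m` and `q < β r`, and the genus is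
`∑ r < m, β r`.

That sum is evaluated with the greedy algorithm, which computes `β`: a minimal representation
can be chosen without repeated or adjacent indices, and such a representation with all indices
below `k` sums to at most `l̃ k`.
-/

/-- The Lucas sequence: l 0 = 2, l 1 = 1, l (n+2) = l (n+1) + l n. -/
def lucas : ℕ → ℕ
  | 0 => 2
  | 1 => 1
  | n + 2 => lucas (n + 1) + lucas n

/-- The modified (monotone) Lucas sequence: l̃ 0 = 1, l̃ 1 = 2, l̃ n = l n for n ≥ 2. -/
def ltil : ℕ → ℕ
  | 0 => 1
  | 1 => 2
  | n + 2 => lucas (n + 2)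

/-- β x : minimal number of summands in a representation of x as a sum of
modified Lucas numbers (with repetitions allowed). -/
noncomputable def beta (x : ℕ) : ℕ :=
  sInf {s : ℕ | ∃ k : ℕ, ∃ b : ℕ → ℕ,
    x = ∑ i ∈ Finset.range (k + 1), b i * ltil i ∧ s = ∑ i ∈ Finset.range (k + 1), b i}

/-- γ x : the greatest k with l̃ k ≤ x (for x ≥ 1). -/
noncomputable def gamma (x : ℕ) : ℕ := sSup {k : ℕ | ltil k ≤ x}

/-- S a : the additive submonoid of ℕ generated by {l_a} ∪ {l_a + l_n : n ∈ ℕ}. -/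
def Sset (a : ℕ) : AddSubmonoid ℕ :=
  AddSubmonoid.closure ({lucas a} ∪ {x : ℕ | ∃ n : ℕ, x = lucas a + lucas n})

/-- T a : the additive submonoid of ℕ generated by {l_a + l_n : n ∈ ℕ}. -/
def Tset (a : ℕ) : AddSubmonoid ℕ :=
  AddSubmonoid.closure {x : ℕ | ∃ n : ℕ, x = lucas a + lucas n}

open Finset (range)

lemma lucas_pos : ∀ n, 0 < lucas n
  | 0 => by decide
  | 1 => by decide
  | n + 2 => by have := lucas_pos (n + 1); rw [lucas]; omega

lemma lucas_succ_of_pos {n : ℕ} (hn : 1 ≤ n) : lucas (n + 1) = lucas n + lucas (n - 1) := by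
  obtain ⟨k, rfl⟩ := Nat.exists_eq_add_of_le' hn
  rfl

lemma lucas_lt_lucas {a n : ℕ} (ha : 2 ≤ a) (hn : n < a) : lucas n < lucas a := by
  induction a, ha using Nat.le_induction generalizing n with
  | base => interval_cases n <;> decide
  | succ a ha ih =>
    have hsucc : lucas a < lucas (a + 1) := by
      have := lucas_pos (a - 1)
      rw [lucas_succ_of_pos (by omega)]
      omega
    rcases Nat.lt_succ_iff_lt_or_eq.mp hn with hn | rfl
    · exact (ih hn).trans hsucc
    · exact hsucc

lemma ltil_eq_lucas {n : ℕ} (hn : 2 ≤ n) : ltil n = lucas n := by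
  obtain ⟨k, rfl⟩ := Nat.exists_eq_add_of_le' hn
  rfl

lemma ltil_add_two {n : ℕ} (hn : 2 ≤ n) : ltil (n + 2) = ltil (n + 1) + ltil n := by
  obtain ⟨k, rfl⟩ := Nat.exists_eq_add_of_le' hn
  rfl

lemma exists_ltil_eq_lucas : ∀ n, ∃ j, ltil j = lucas n
  | 0 => ⟨1, rfl⟩
  | 1 => ⟨0, rfl⟩
  | n + 2 => ⟨n + 2, rfl⟩

lemma exists_lucas_eq_ltil : ∀ n, ∃ j, lucas j = ltil n
  | 0 => ⟨1, rfl⟩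
  | 1 => ⟨0, rfl⟩
  | n + 2 => ⟨n + 2, rfl⟩

lemma ltil_lt_succ : ∀ n, ltil n < ltil (n + 1)
  | 0 => by decide
  | 1 => by decide
  | n + 2 => by
    have := lucas_pos (n + 1)
    show lucas (n + 2) < lucas (n + 2) + lucas (n + 1)
    omega

lemma ltil_strictMono : StrictMono ltil := strictMono_nat_of_lt_succ ltil_lt_succ

lemma ltil_pos (n : ℕ) : 0 < ltil n :=
  Nat.one_pos.trans_le (ltil_strictMono.monotone n.zero_le)

def ltilSum : Multiset ℕ →+ ℕ :=
  Multiset.sumAddMonoidHom.comp (Multiset.mapAddMonoidHom ltil)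

lemma ltilSum_apply (M : Multiset ℕ) : ltilSum M = (M.map ltil).sum := rfl

lemma ltil_le_ltilSum {M : Multiset ℕ} {i : ℕ} (hi : i ∈ M) : ltil i ≤ ltilSum M :=
  Multiset.le_sum_of_mem (Multiset.mem_map_of_mem ltil hi)

lemma beta_le_card (M : Multiset ℕ) : beta (ltilSum M) ≤ Multiset.card M := by
  classical
  have hM : ∀ i ∈ M, i ∈ range (ltilSum M + 1) := fun i hi =>
    Finset.mem_range_succ_iff.mpr ((ltil_strictMono.id_le i).trans (ltil_le_ltilSum hi))
  refine Nat.sInf_le ⟨ltilSum M, M.count, ?_, (Multiset.sum_count_eq_card hM).symm⟩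
  calc ltilSum M = ∑ i ∈ M.toFinset, M.count i * ltil i := by
        rw [ltilSum_apply, Finset.sum_multiset_map_count]; rfl
    _ = ∑ i ∈ range (ltilSum M + 1), M.count i * ltil i :=
        Finset.sum_subset (fun i hi => hM i (Multiset.mem_toFinset.mp hi)) fun i _ hi => by
          rw [Multiset.count_eq_zero_of_notMem (mt Multiset.mem_toFinset.mpr hi), zero_mul]

lemma beta_sum_le_card (s : Finset ℕ) : beta (∑ i ∈ s, ltil i) ≤ s.card :=
  beta_le_card s.val

lemma exists_card_eq_beta (x : ℕ) : ∃ M, ltilSum M = x ∧ Multiset.card M = beta x := by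
  obtain ⟨k, b, hx, hs⟩ := Nat.sInf_mem (s := {s : ℕ | ∃ k : ℕ, ∃ b : ℕ → ℕ,
      x = ∑ i ∈ range (k + 1), b i * ltil i ∧ s = ∑ i ∈ range (k + 1), b i})
    ⟨x, 0, fun _ => x, by simp [ltil], by simp⟩
  refine ⟨∑ i ∈ range (k + 1), Multiset.replicate (b i) i, ?_, ?_⟩
  · simp [map_sum, ltilSum_apply, hx]
  · simp [beta, hs]

lemma beta_zero : beta 0 = 0 := by
  simpa using beta_le_card 0

lemma beta_add_le (x y : ℕ) : beta (x + y) ≤ beta x + beta y := by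
  obtain ⟨M, rfl, hM⟩ := exists_card_eq_beta x
  obtain ⟨N, rfl, hN⟩ := exists_card_eq_beta y
  simpa [hM, hN] using beta_le_card (M + N)

lemma beta_ltil (n : ℕ) : beta (ltil n) = 1 := by
  obtain ⟨M, hM, hc⟩ := exists_card_eq_beta (ltil n)
  have hpos : beta (ltil n) ≠ 0 := by
    rintro h
    rw [h, Multiset.card_eq_zero] at hc
    rw [hc, map_zero] at hM
    exact (ltil_pos n).ne hM
  have := beta_le_card {n}
  simp only [ltilSum_apply, Multiset.map_singleton, Multiset.sum_singleton,
    Multiset.card_singleton] at this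
  omega

lemma beta_lucas (n : ℕ) : beta (lucas n) = 1 := by
  obtain ⟨j, hj⟩ := exists_ltil_eq_lucas n
  rw [← hj, beta_ltil]

/-- A tie-breaker among representations with the same number of summands: the exchanges
`l̃ i + l̃ i = l̃ (i + 1) + l̃ (i - 2)` (and their small-index variants) strictly increase it. -/
def potential : Multiset ℕ →+ ℕ :=
  Multiset.sumAddMonoidHom.comp (Multiset.mapAddMonoidHom (2 ^ ·))

lemma potential_apply (M : Multiset ℕ) : potential M = (M.map (2 ^ ·)).sum := rfl

def Improves (P Q : Multiset ℕ) : Prop :=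
  ltilSum P = ltilSum Q ∧
    (Multiset.card P < Multiset.card Q ∨
      Multiset.card P = Multiset.card Q ∧ potential Q < potential P)

lemma Improves.add_right {P Q : Multiset ℕ} (h : Improves P Q) (R : Multiset ℕ) :
    Improves (P + R) (Q + R) := by
  obtain ⟨hs, hc⟩ := h
  refine ⟨by rw [map_add, map_add, hs], ?_⟩
  simp only [map_add, Multiset.card_add]
  omega

lemma exists_improves_pair_self : ∀ i, ∃ P, Improves P {i, i}
  | 0 => ⟨{1}, by unfold Improves; decide⟩
  | 1 => ⟨{3}, by unfold Improves; decide⟩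
  | 2 => ⟨{3, 1}, by unfold Improves; decide⟩
  | 3 => ⟨{4, 0}, by unfold Improves; decide⟩
  | j + 4 => by
    refine ⟨{j + 5, j + 2}, ?_, Or.inr ⟨rfl, ?_⟩⟩
    · have h5 : ltil (j + 5) = ltil (j + 4) + ltil (j + 3) := ltil_add_two (by omega)
      have h4 : ltil (j + 4) = ltil (j + 3) + ltil (j + 2) := ltil_add_two (by omega)
      simp only [ltilSum_apply, Multiset.insert_eq_cons, Multiset.map_cons,
        Multiset.map_singleton, Multiset.sum_cons, Multiset.sum_singleton] at h5 h4 ⊢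
      omega
    · simp only [potential_apply, Multiset.insert_eq_cons, Multiset.map_cons,
        Multiset.map_singleton, Multiset.sum_cons, Multiset.sum_singleton, pow_succ]
      have : 0 < 2 ^ j := by positivity
      omega

lemma exists_improves_pair_succ : ∀ i, ∃ P, Improves P {i, i + 1}
  | 0 => ⟨{2}, by unfold Improves; decide⟩
  | 1 => ⟨{0, 3}, by unfold Improves; decide⟩
  | j + 2 => by
    refine ⟨{j + 4}, ?_, Or.inl (by simp)⟩
    have h : ltil (j + 4) = ltil (j + 2 + 1) + ltil (j + 2) := ltil_add_two (by omega)
    simp only [ltilSum_apply, Multiset.insert_eq_cons, Multiset.map_cons,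
      Multiset.map_singleton, Multiset.sum_cons, Multiset.sum_singleton]
    omega

lemma exists_unimprovable_rep (x : ℕ) :
    ∃ M, ltilSum M = x ∧ Multiset.card M = beta x ∧ ∀ P Q t, M = Q + t → ¬ Improves P Q := by
  set W := {p | ∃ M, ltilSum M = x ∧ Multiset.card M = beta x ∧ potential M = p}
  have hne : W.Nonempty := by
    obtain ⟨M, hM, hc⟩ := exists_card_eq_beta x
    exact ⟨_, M, hM, hc, rfl⟩
  have hbdd : BddAbove W := by
    refine ⟨beta x * 2 ^ x, ?_⟩
    rintro _ ⟨M, rfl, hc, rfl⟩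
    rw [← hc, ← smul_eq_mul, ← Multiset.card_map (2 ^ ·) M, potential_apply]
    refine Multiset.sum_le_card_nsmul _ _ fun _ hy => ?_
    obtain ⟨i, hi, rfl⟩ := Multiset.mem_map.mp hy
    exact Nat.pow_le_pow_right two_pos ((ltil_strictMono.id_le i).trans (ltil_le_ltilSum hi))
  -- fewest summands and, among those, the largest potential
  obtain ⟨M, hM, hc, hp⟩ := Nat.sSup_mem hne hbdd
  refine ⟨M, hM, hc, ?_⟩
  rintro P Q t rfl hPQ
  obtain ⟨hs, hcard⟩ := hPQ.add_right t
  rw [hM] at hs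
  rcases hcard with hlt | ⟨heq, hpot⟩
  · have := beta_le_card (P + t)
    rw [hs] at this
    omega
  · have := le_csSup hbdd ⟨P + t, hs, heq.trans hc, rfl⟩
    omega

lemma exists_sparse_rep (x : ℕ) :
    ∃ s : Finset ℕ, (∀ i ∈ s, i + 1 ∉ s) ∧ ∑ i ∈ s, ltil i = x ∧ s.card = beta x := by
  obtain ⟨M, hM, hc, hopt⟩ := exists_unimprovable_rep x
  have hnd : M.Nodup := Multiset.nodup_iff_ne_cons_cons.mpr fun i t h => by
    obtain ⟨P, hP⟩ := exists_improves_pair_self i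
    exact hopt P {i, i} t (by simpa using h) hP
  refine ⟨⟨M, hnd⟩, fun i hi hi1 => ?_, hM, hc⟩
  obtain ⟨t₁, ht₁⟩ := Multiset.exists_cons_of_mem (show i ∈ M from hi)
  have : i + 1 ∈ t₁ := by
    have h : i + 1 ∈ M := hi1
    rw [ht₁, Multiset.mem_cons] at h
    exact h.resolve_left (by omega)
  obtain ⟨t, rfl⟩ := Multiset.exists_cons_of_mem this
  obtain ⟨P, hP⟩ := exists_improves_pair_succ i
  exact hopt P {i, i + 1} t (by simpa using ht₁) hP

lemma sum_ltil_le_of_forall_lt (k : ℕ) {s : Finset ℕ} (hsep : ∀ i ∈ s, i + 1 ∉ s)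
    (hlt : ∀ i ∈ s, i < k) : ∑ i ∈ s, ltil i ≤ ltil k := by
  induction k using Nat.strong_induction_on generalizing s with
  | _ k ih =>
    rcases Nat.lt_or_ge k 4 with hk | hk
    · have hsmall : ∀ s ∈ (range 3).powerset, (∀ i ∈ s, i + 1 ∉ s) →
          ∀ k < 4, (∀ i ∈ s, i < k) → ∑ i ∈ s, ltil i ≤ ltil k := by
        decide
      exact hsmall s (Finset.mem_powerset.mpr fun i hi =>
        Finset.mem_range.mpr (by have := hlt i hi; omega)) hsep k hk hlt
    obtain ⟨j, rfl⟩ := Nat.exists_eq_add_of_le' hk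
    by_cases htop : j + 3 ∈ s
    · have hrest : ∑ i ∈ s.erase (j + 3), ltil i ≤ ltil (j + 2) := by
        refine ih _ (by omega) (fun i hi hi1 => hsep i (Finset.mem_of_mem_erase hi)
          (Finset.mem_of_mem_erase hi1)) fun i hi => ?_
        obtain ⟨hne, hi⟩ := Finset.mem_erase.mp hi
        have := hlt i hi
        have : i ≠ j + 2 := by rintro rfl; exact hsep _ hi htop
        omega
      have hrec : ltil (j + 4) = ltil (j + 3) + ltil (j + 2) := ltil_add_two (by omega)
      rw [← Finset.add_sum_erase s ltil htop, hrec]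
      omega
    · exact (ih (j + 3) (by omega) hsep fun i hi =>
        lt_of_le_of_ne (Nat.lt_succ_iff.mp (hlt i hi)) (ne_of_mem_of_not_mem hi htop)).trans
        (ltil_lt_succ _).le

/-- A sparse minimal representation of `x` must use `l̃ g`, unless `x = l̃ g`. -/
lemma beta_eq_beta_sub_add_one {x g : ℕ} (h₁ : ltil g ≤ x) (h₂ : x < ltil (g + 1)) :
    beta x = beta (x - ltil g) + 1 := by
  have hle : beta x ≤ beta (x - ltil g) + 1 := by
    simpa [Nat.sub_add_cancel h₁, beta_ltil] using beta_add_le (x - ltil g) (ltil g)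
  obtain ⟨s, hsep, rfl, hc⟩ := exists_sparse_rep x
  have hs_le : ∀ i ∈ s, i < g + 1 := fun i hi => ltil_strictMono.lt_iff_lt.mp
    ((Finset.single_le_sum (fun _ _ => Nat.zero_le _) hi).trans_lt h₂)
  by_cases hg : g ∈ s
  · have hrest := beta_sum_le_card (s.erase g)
    rw [Finset.card_erase_of_mem hg] at hrest
    rw [← Finset.add_sum_erase s ltil hg] at hc hle ⊢
    rw [Nat.add_sub_cancel_left] at hle ⊢
    have := Finset.card_pos.mpr ⟨g, hg⟩
    omega
  · have := sum_ltil_le_of_forall_lt g hsep fun i hi =>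
      lt_of_le_of_ne (Nat.lt_succ_iff.mp (hs_le i hi)) (ne_of_mem_of_not_mem hi hg)
    rw [le_antisymm this h₁, Nat.sub_self, beta_zero, beta_ltil]

lemma beta_sub_lucas_le {a u : ℕ} (ha : 2 ≤ a) (h₁ : lucas a ≤ u) (h₂ : u < 2 * lucas a) :
    beta (u - lucas a) ≤ beta u + 1 := by
  have ha₀ : ltil a = lucas a := ltil_eq_lucas ha
  have ha₁ : ltil (a + 1) = lucas (a + 1) := ltil_eq_lucas (by omega)
  by_cases hu : u < lucas (a + 1)
  · have hg := beta_eq_beta_sub_add_one (g := a) (x := u) (by rwa [ha₀]) (by rwa [ha₁])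
    rw [ha₀] at hg
    omega
  · have hrec : lucas (a + 1) = lucas a + lucas (a - 1) := lucas_succ_of_pos (by omega)
    have hlt : lucas (a - 1) < lucas a := lucas_lt_lucas ha (by omega)
    have hg := beta_eq_beta_sub_add_one (g := a + 1) (x := u) (by omega)
      (show u < ltil (a + 2) by rw [ltil_add_two ha, ha₁, ha₀]; omega)
    rw [ha₁] at hg
    have hsplit : (u - lucas (a + 1)) + lucas (a - 1) = u - lucas a := by omega
    have hadd := beta_add_le (u - lucas (a + 1)) (lucas (a - 1))
    rw [hsplit, beta_lucas] at hadd
    omega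

noncomputable def defect (a x : ℕ) : ℤ := beta (x % lucas a) - (x / lucas a : ℕ)

lemma defect_zero (a : ℕ) : defect a 0 = 0 := by
  simp [defect, beta_zero]

lemma defect_add_le {a : ℕ} (ha : 2 ≤ a) (x y : ℕ) :
    defect a (x + y) ≤ defect a x + defect a y := by
  have hm := lucas_pos a
  have hx := Nat.mod_lt x hm
  have hy := Nat.mod_lt y hm
  have hbeta := beta_add_le (x % lucas a) (y % lucas a)
  unfold defect
  rw [Nat.add_div hm, Nat.add_mod]
  split_ifs with hcarry
  · rw [Nat.mod_eq_sub_mod hcarry, Nat.mod_eq_of_lt (by omega)]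
    have := beta_sub_lucas_le ha hcarry (by omega)
    push_cast
    omega
  · rw [Nat.mod_eq_of_lt (not_le.mp hcarry)]
    push_cast
    omega

lemma defect_lucas_self (a : ℕ) : defect a (lucas a) = -1 := by
  simp [defect, Nat.div_self (lucas_pos a), beta_zero]

lemma defect_lucas_of_lt {a n : ℕ} (ha : 2 ≤ a) (hn : n < a) : defect a (lucas n) = 1 := by
  have h := lucas_lt_lucas ha hn
  simp [defect, Nat.mod_eq_of_lt h, Nat.div_eq_of_lt h, beta_lucas]

lemma defect_lucas_add_nonpos {a : ℕ} (ha : 2 ≤ a) : ∀ k, defect a (lucas (a + k)) ≤ 0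
  | 0 => by simp [defect_lucas_self]
  | 1 => by
    have := defect_add_le ha (lucas a) (lucas (a - 1))
    rw [← lucas_succ_of_pos (by omega), defect_lucas_self,
      defect_lucas_of_lt (n := a - 1) ha (by omega)] at this
    simpa using this
  | k + 2 => by
    have := defect_add_le ha (lucas (a + k + 1)) (lucas (a + k))
    have h₁ := defect_lucas_add_nonpos ha (k + 1)
    have h₀ := defect_lucas_add_nonpos ha k
    rw [← add_assoc] at h₁ ⊢
    exact this.trans (by linarith)

lemma defect_lucas_le_one {a : ℕ} (ha : 2 ≤ a) (n : ℕ) : defect a (lucas n) ≤ 1 := by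
  rcases Nat.lt_or_ge n a with hn | hn
  · exact (defect_lucas_of_lt ha hn).le
  · obtain ⟨k, rfl⟩ := Nat.exists_eq_add_of_le hn
    exact (defect_lucas_add_nonpos ha k).trans zero_le_one

lemma defect_nonpos_of_mem {a x : ℕ} (ha : 2 ≤ a) (hx : x ∈ Sset a) : defect a x ≤ 0 := by
  induction hx using AddSubmonoid.closure_induction with
  | mem x hx =>
    rcases hx with rfl | ⟨n, rfl⟩
    · simp [defect_lucas_self]
    · linarith [defect_add_le ha (lucas a) (lucas n), defect_lucas_self a,
        defect_lucas_le_one ha n]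
  | zero => exact (defect_zero a).le
  | add x y _ _ hx hy => linarith [defect_add_le ha x y]

/-- Each summand `l̃ i` of a representation pairs with one copy of `l a` into a generator. -/
lemma lucas_mul_card_add_ltilSum_mem (a : ℕ) (M : Multiset ℕ) :
    lucas a * Multiset.card M + ltilSum M ∈ Sset a := by
  induction M using Multiset.induction with
  | empty => simp [(Sset a).zero_mem]
  | cons i M ih =>
    obtain ⟨j, hj⟩ := exists_lucas_eq_ltil i
    have hgen : lucas a + ltil i ∈ Sset a :=
      AddSubmonoid.subset_closure (Or.inr ⟨j, by rw [hj]⟩)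
    convert (Sset a).add_mem hgen ih using 1
    simp only [Multiset.card_cons, ltilSum_apply, Multiset.map_cons, Multiset.sum_cons]
    ring

lemma mem_Sset_iff {a x : ℕ} (ha : 2 ≤ a) :
    x ∈ Sset a ↔ beta (x % lucas a) ≤ x / lucas a := by
  refine ⟨fun hx => ?_, fun h => ?_⟩
  · have := defect_nonpos_of_mem ha hx
    unfold defect at this
    omega
  · obtain ⟨M, hM, hc⟩ := exists_card_eq_beta (x % lucas a)
    have hla : lucas a ∈ Sset a := AddSubmonoid.subset_closure (Or.inl rfl)
    convert (Sset a).add_mem (lucas_mul_card_add_ltilSum_mem a M)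
      ((Sset a).nsmul_mem hla (x / lucas a - beta (x % lucas a))) using 1
    rw [hM, hc, smul_eq_mul]
    nth_rewrite 1 [← Nat.div_add_mod x (lucas a)]
    zify [h]
    ring

lemma ncard_setOf_div_lt {m : ℕ} (hm : 0 < m) (f : ℕ → ℕ) :
    {x : ℕ | x / m < f (x % m)}.ncard = ∑ r ∈ range m, f r := by
  have hset : {x : ℕ | x / m < f (x % m)} =
      ↑(((range m).sigma fun r => range (f r)).image fun p => m * p.2 + p.1) := by
    ext x
    simp only [Set.mem_ofPred_eq, Finset.coe_image, Set.mem_image, Finset.mem_coe,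
      Finset.mem_sigma, Finset.mem_range, Sigma.exists]
    constructor
    · exact fun h => ⟨x % m, x / m, ⟨Nat.mod_lt x hm, h⟩, Nat.div_add_mod x m⟩
    · rintro ⟨r, q, ⟨hr, hq⟩, rfl⟩
      rwa [Nat.mul_add_div hm, Nat.div_eq_of_lt hr, add_zero, Nat.mul_add_mod,
        Nat.mod_eq_of_lt hr]
  rw [hset, Set.ncard_coe_finset, Finset.card_image_of_injOn, Finset.card_sigma]
  · simp
  · rintro ⟨r, q⟩ hp ⟨r', q'⟩ hp' heq
    simp only [Finset.coe_sigma, Set.mem_sigma_iff, Finset.mem_coe, Finset.mem_range] at hp hp'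
    have hmod := congrArg (· % m) heq
    have hdiv := congrArg (· / m) heq
    simp only [Nat.mul_add_mod, Nat.mod_eq_of_lt hp.1, Nat.mod_eq_of_lt hp'.1, Nat.mul_add_div hm,
      Nat.div_eq_of_lt hp.1, Nat.div_eq_of_lt hp'.1] at hmod hdiv
    subst hmod
    simp_all

/-- Writing `s n = ∑ r < l n, beta r`, greedy removal of `l (n + 1)` from
`l (n + 1) ≤ r < l (n + 2)` gives `s (n + 2) = s (n + 1) + s n + l n`. -/
lemma five_mul_sum_beta : ∀ b, 5 * ∑ r ∈ range (lucas (b + 2)), beta r =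
    (b + 2) * (lucas (b + 2) + lucas b)
  | 0 => by
    have h₁ : beta 1 = 1 := beta_ltil 0
    have h₂ : beta 2 = 1 := beta_ltil 1
    simp [Finset.sum_range_succ, lucas, beta_zero, h₁, h₂]
  | 1 => by
    have h₁ : beta 1 = 1 := beta_ltil 0
    have h₂ : beta 2 = 1 := beta_ltil 1
    have h₃ : beta 3 = 1 := beta_ltil 2
    simp [Finset.sum_range_succ, lucas, beta_zero, h₁, h₂, h₃]
  | c + 2 => by
    have hgreedy : ∀ s ∈ range (lucas (c + 2)), beta (lucas (c + 3) + s) = beta s + 1 := by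
      intro s hs
      have hs := Finset.mem_range.mp hs
      have h₃ : ltil (c + 3) = lucas (c + 3) := ltil_eq_lucas (by omega)
      have h₄ : ltil (c + 3 + 1) = lucas (c + 3) + lucas (c + 2) := ltil_eq_lucas (by omega)
      have := beta_eq_beta_sub_add_one (x := lucas (c + 3) + s) (g := c + 3) (by omega)
        (by omega)
      rwa [h₃, Nat.add_sub_cancel_left] at this
    have ih₁ := five_mul_sum_beta (c + 1)
    have ih₀ := five_mul_sum_beta c
    rw [show lucas (c + 2 + 2) = lucas (c + 3) + lucas (c + 2) from rfl, Finset.sum_range_add,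
      Finset.sum_congr rfl hgreedy, Finset.sum_add_distrib, Finset.sum_const, Finset.card_range,
      smul_eq_mul, mul_one]
    have e₃ : lucas (c + 3) = lucas (c + 2) + lucas (c + 1) := rfl
    have e₂ : lucas (c + 2) = lucas (c + 1) + lucas c := rfl
    rw [show c + 1 + 2 = c + 3 from rfl] at ih₁
    rw [e₃, e₂] at ih₁ ⊢
    rw [e₂] at ih₀
    linarith

theorem genus_S (a : ℕ) (ha : 2 ≤ a) :
    5 * {x : ℕ | x ∉ Sset a}.ncard = a * (lucas a + lucas (a - 2)) := by
  have hgaps : {x : ℕ | x ∉ Sset a} = {x | x / lucas a < beta (x % lucas a)} := by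
    ext x
    simp [mem_Sset_iff ha]
  obtain ⟨b, rfl⟩ := Nat.exists_eq_add_of_le' ha
  rw [hgaps, ncard_setOf_div_lt (lucas_pos _), five_mul_sum_beta, Nat.add_sub_cancel]
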